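/- Worpitzky's identity: for every k \ge 0, \sum_{m \ge 1} m^k x^{m-1} = A_k(x)/(1-x)^{k+1} as an identity of formal power series (with A_0(x) = 1), where A_k(x) is the Eulerian polynomial counting permutations of S_k by descents. -/

import Mathlib

open Polynomial Finset

/-- The value `w(i)` of a permutation of `{0,…,n-1}` at position `i` (0-based),
padded by `n` outside the range. -/
def permVal {n : ℕ} (w : Equiv.Perm (Fin n)) (i : ℕ) : ℕ :=
  if h : i < n then (w ⟨i, h⟩ : ℕ) else n

/-- The number of descents of a permutation. -/
def des {n : ℕ} (w : Equiv.Perm (Fin n)) : ℕ :=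
  ((Finset.range (n - 1)).filter fun i => permVal w (i + 1) < permVal w i).card

/-- The Eulerian polynomial `A_n(x) = ∑_{w ∈ S_n} x^{des(w)}`. -/
noncomputable def eulerian (n : ℕ) : Polynomial ℝ :=
  ∑ w : Equiv.Perm (Fin n), Polynomial.X ^ des w

/-!
Inserting the largest letter `k` into one of the `k + 1` gaps of a permutation `w ∈ S_k` creates
a new descent, except at the end of the word and inside one of the `des w` descents of `w`, where
it only replaces the old one. Summing `x ^ des` over all insertions gives the recurrence
`A_{k+1} = (1 + k x) A_k + x (1 - x) A_k'`. On the other side, `F_k = ∑ (j + 1)^k x^j` satisfies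
`F_{k+1} = (x F_k)'`, and differentiating `F_k (1 - x)^(k+1)` shows that these products obey the
same recurrence, so the identity follows by induction on `k`.
-/

def descentCount (f : ℕ → ℕ) (N : ℕ) : ℕ :=
  #{i ∈ range N | f (i + 1) < f i}

namespace descentCount

variable {f g : ℕ → ℕ} {N : ℕ}

@[simp] lemma zero (f : ℕ → ℕ) : descentCount f 0 = 0 := rfl

lemma succ (f : ℕ → ℕ) (N : ℕ) :
    descentCount f (N + 1) = descentCount f N + if f (N + 1) < f N then 1 else 0 := by
  simp only [descentCount, card_filter, sum_range_succ]

lemma congr (h : ∀ i ≤ N, f i = g i) : descentCount f N = descentCount g N := by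
  refine congrArg card (filter_congr fun i hi => ?_)
  rw [mem_range] at hi
  rw [h i hi.le, h (i + 1) hi]

lemma eq_of_forall_le_succ {N₀ : ℕ} (h : ∀ i ≥ N₀, f i ≤ f (i + 1)) (hN : N₀ ≤ N) :
    descentCount f N = descentCount f N₀ := by
  induction N, hN using Nat.le_induction with
  | base => rfl
  | succ N hN ih => rw [succ, ih, if_neg (h N hN).not_gt, add_zero]

lemma eq_card_fin (f : ℕ → ℕ) (N : ℕ) :
    descentCount f N = #{p : Fin (N + 1) | 0 < (p : ℕ) ∧ f p < f (p - 1)} := by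
  rw [card_filter, Fin.sum_univ_succ, descentCount, card_filter, ← Fin.sum_univ_eq_sum_range]
  simp

end descentCount

def insertAt (f : ℕ → ℕ) (p M : ℕ) (i : ℕ) : ℕ :=
  if i < p then f i else if i = p then M else f (i - 1)

/-- Inserting an upper bound `M` at `p` breaks the descent of `f` at `p - 1` (if any) and creates
one at `p` unless `f p = M`. -/
lemma descentCount_insertAt {f : ℕ → ℕ} {p M N : ℕ} (hM : ∀ i, f i ≤ M) (hp : p ≤ N) :
    descentCount (insertAt f p M) (N + 1) + (if 0 < p ∧ f p < f (p - 1) then 1 else 0) =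
      descentCount f N + if f p < M then 1 else 0 := by
  induction N, hp using Nat.le_induction with
  | base =>
    have hbefore : descentCount (insertAt f p M) p + (if 0 < p ∧ f p < f (p - 1) then 1 else 0) =
        descentCount f p := by
      cases p with
      | zero => simp
      | succ q =>
        have hq : descentCount (insertAt f (q + 1) M) q = descentCount f q :=
          descentCount.congr fun i hi => if_pos (by omega)
        simp [descentCount.succ, hq, insertAt, (hM q).not_gt]
    have hp : insertAt f p M (p + 1) < insertAt f p M p ↔ f p < M := by
      simp only [insertAt, lt_irrefl, if_false, if_true, p.lt_succ_self.not_gt, p.succ_ne_self,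
        Nat.add_sub_cancel]
    rw [descentCount.succ, if_congr hp rfl rfl, ← hbefore]
    omega
  | succ N hN ih =>
    have hstep : insertAt f p M (N + 1 + 1) < insertAt f p M (N + 1) ↔ f (N + 1) < f N := by
      simp only [insertAt, if_neg (show ¬ N + 1 + 1 < p by omega),
        if_neg (show N + 1 + 1 ≠ p by omega), if_neg (show ¬ N + 1 < p by omega),
        if_neg (show N + 1 ≠ p by omega), Nat.add_sub_cancel]
    rw [descentCount.succ _ (N + 1), descentCount.succ f N, if_congr hstep rfl rfl]
    omega

section permVal

variable {n : ℕ} (w : Equiv.Perm (Fin n))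

lemma permVal_le (i : ℕ) : permVal w i ≤ n := by
  unfold permVal
  split_ifs
  exacts [(w _).isLt.le, le_rfl]

lemma permVal_of_le {i : ℕ} (h : n ≤ i) : permVal w i = n :=
  dif_neg h.not_gt

lemma permVal_lt_iff {i : ℕ} : permVal w i < n ↔ i < n := by
  unfold permVal
  split_ifs with h
  · exact iff_of_true (w _).isLt h
  · exact iff_of_false (lt_irrefl n) h

lemma des_eq_descentCount {N : ℕ} (hN : n - 1 ≤ N) : des w = descentCount (permVal w) N := by
  refine (descentCount.eq_of_forall_le_succ (fun i hi => ?_) hN).symm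
  rw [permVal_of_le w (by omega : n ≤ i + 1)]
  exact permVal_le w i

end permVal

/-- The word of `insertMax w p` is the word of `w` with the letter `k` inserted at position `p`. -/
def insertMax {k : ℕ} (w : Equiv.Perm (Fin k)) (p : Fin (k + 1)) : Equiv.Perm (Fin (k + 1)) :=
  (finSuccEquiv' p).trans ((Equiv.optionCongr w).trans (finSuccEquiv' (Fin.last k)).symm)

section insertMax

variable {k : ℕ} (w : Equiv.Perm (Fin k)) (p : Fin (k + 1))

lemma insertMax_apply_self : insertMax w p p = Fin.last k := by
  simp [insertMax, finSuccEquiv'_at, finSuccEquiv'_symm_none]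

lemma insertMax_apply_succAbove (j : Fin k) : insertMax w p (p.succAbove j) = (w j).castSucc := by
  simp [insertMax, finSuccEquiv'_succAbove, finSuccEquiv'_symm_some, Fin.succAbove_last]

lemma permVal_insertMax {i : ℕ} (hi : i ≤ k) :
    permVal (insertMax w p) i = insertAt (permVal w) p k i := by
  have hi' : i < k + 1 := Nat.lt_succ_of_le hi
  simp only [permVal, insertAt, dif_pos hi']
  rcases lt_trichotomy i p with h | rfl | h
  · have hik : i < k := h.trans_le (Nat.lt_succ_iff.mp p.isLt)
    have hpos : (⟨i, hi'⟩ : Fin (k + 1)) = p.succAbove ⟨i, hik⟩ :=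
      (Fin.succAbove_of_castSucc_lt p ⟨i, hik⟩ h).symm
    rw [if_pos h, dif_pos hik, hpos, insertMax_apply_succAbove]
    rfl
  · simp [insertMax_apply_self]
  · have hik : i - 1 < k := by omega
    have hpos : (⟨i, hi'⟩ : Fin (k + 1)) = p.succAbove ⟨i - 1, hik⟩ := by
      rw [Fin.succAbove_of_le_castSucc _ _ (Fin.le_def.mpr (show (p : ℕ) ≤ i - 1 by omega))]
      exact Fin.ext (show i = i - 1 + 1 by omega)
    rw [if_neg (by omega), if_neg (by omega), dif_pos hik, hpos, insertMax_apply_succAbove]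
    rfl

lemma des_insertMax :
    des (insertMax w p) + (if 0 < (p : ℕ) ∧ permVal w p < permVal w (p - 1) then 1 else 0) =
      des w + if (p : ℕ) < k then 1 else 0 := by
  have hlast : ∀ i ≥ k, insertAt (permVal w) p k i ≤ insertAt (permVal w) p k (i + 1) := by
    intro i hi
    simp only [insertAt, if_neg (show ¬ i + 1 < p by omega), if_neg (show i + 1 ≠ p by omega),
      Nat.add_sub_cancel, permVal_of_le w hi]
    split_ifs <;> first | exact le_rfl | exact permVal_le w _
  calc des (insertMax w p) + _
      = descentCount (insertAt (permVal w) p k) (k + 1) + _ := by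
        rw [descentCount.eq_of_forall_le_succ hlast k.le_succ]
        exact congrArg (· + _) (descentCount.congr fun i hi => permVal_insertMax w p hi)
    _ = des w + _ := by
        rw [descentCount_insertAt (permVal_le w) (Nat.lt_succ_iff.mp p.isLt),
          des_eq_descentCount w (Nat.sub_le k 1)]
        simp only [permVal_lt_iff]

lemma pow_des_insertMax {R : Type*} [Ring R] (x : R) :
    x ^ des (insertMax w p) = x ^ des w +
      ((if (p : ℕ) < k then 1 else 0) -
        if 0 < (p : ℕ) ∧ permVal w p < permVal w (p - 1) then 1 else 0) *
      (x ^ (des w + 1) - x ^ des w) := by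
  have h := des_insertMax w p
  by_cases hend : (p : ℕ) < k
  · by_cases hdesc : 0 < (p : ℕ) ∧ permVal w p < permVal w (p - 1)
    · simp only [if_pos hdesc, if_pos hend] at h ⊢
      rw [show des (insertMax w p) = des w by omega]
      noncomm_ring
    · simp only [if_neg hdesc, if_pos hend] at h ⊢
      rw [show des (insertMax w p) = des w + 1 by omega]
      noncomm_ring
  · have hdesc : ¬ (0 < (p : ℕ) ∧ permVal w p < permVal w (p - 1)) := fun hd =>
      hend ((permVal_lt_iff w).mp (hd.2.trans_le (permVal_le w _)))
    simp only [if_neg hdesc, if_neg hend] at h ⊢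
    rw [show des (insertMax w p) = des w by omega]
    noncomm_ring

end insertMax

lemma insertMax_bijective (k : ℕ) :
    Function.Bijective fun wp : Equiv.Perm (Fin k) × Fin (k + 1) => insertMax wp.1 wp.2 := by
  refine (Fintype.bijective_iff_injective_and_card _).mpr ⟨?_, ?_⟩
  · rintro ⟨w, p⟩ ⟨w', p'⟩ h
    dsimp only at h
    obtain rfl : p = p' := by
      by_contra hne
      obtain ⟨j, rfl⟩ := Fin.exists_succAbove_eq hne
      have := insertMax_apply_self w (p'.succAbove j)
      rw [h, insertMax_apply_succAbove] at this
      exact (Fin.castSucc_lt_last _).ne this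
    obtain rfl : w = w' := Equiv.ext fun j => Fin.castSucc_injective _ <| by
      simpa only [insertMax_apply_succAbove] using congrArg (· (p.succAbove j)) h
    rfl
  · simp [Fintype.card_perm, Nat.factorial_succ, mul_comm]

lemma Polynomial.X_mul_derivative_X_pow {R : Type*} [CommSemiring R] (d : ℕ) :
    X * derivative (X ^ d : R[X]) = (d : R[X]) * X ^ d := by
  cases d with
  | zero => simp
  | succ d => rw [derivative_X_pow, C_eq_natCast, Nat.add_sub_cancel]; ring

lemma sum_X_pow_des_insertMax {R : Type*} [CommRing R] {k : ℕ} (w : Equiv.Perm (Fin k)) :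
    ∑ p, (X : R[X]) ^ des (insertMax w p) =
      (1 + (k : R[X]) * X) * X ^ des w + X * (1 - X) * derivative (X ^ des w) := by
  have hend : ∑ p : Fin (k + 1), (if (p : ℕ) < k then 1 else 0 : R[X]) = k := by
    rw [sum_boole, Fin.card_filter_val_lt, min_eq_right k.le_succ]
  have hdesc : ∑ p : Fin (k + 1),
      (if 0 < (p : ℕ) ∧ permVal w p < permVal w (p - 1) then 1 else 0 : R[X]) = des w := by
    rw [sum_boole, ← descentCount.eq_card_fin, ← des_eq_descentCount w (Nat.sub_le k 1)]
  simp only [pow_des_insertMax, sum_add_distrib, ← sum_mul, sum_sub_distrib, hend, hdesc,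
    sum_const, card_univ, Fintype.card_fin, nsmul_eq_mul]
  rw [mul_comm X (1 - X), mul_assoc, X_mul_derivative_X_pow]
  push_cast
  ring

lemma eulerian_zero : eulerian 0 = 1 := by
  simp [eulerian, des]

lemma eulerian_succ (k : ℕ) :
    eulerian (k + 1) =
      (1 + (k : ℝ[X]) * X) * eulerian k + X * (1 - X) * derivative (eulerian k) := by
  rw [eulerian, ← (insertMax_bijective k).sum_comp, Fintype.sum_prod_type]
  simp only [sum_X_pow_des_insertMax, eulerian, map_sum, mul_sum, sum_add_distrib]

lemma Polynomial.coe_natCast {R : Type*} [CommSemiring R] (n : ℕ) :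
    ((n : R[X]) : PowerSeries R) = n :=
  map_natCast coeToPowerSeries.ringHom n

namespace PowerSeries

lemma mk_succ_pow_succ (R : Type*) [CommSemiring R] (k : ℕ) :
    (mk fun j : ℕ => (((j + 1) ^ (k + 1) : ℕ) : R)) =
      d⁄dX R (X * mk fun j : ℕ => (((j + 1) ^ k : ℕ) : R)) := by
  ext n
  rw [coeff_derivative, coeff_succ_X_mul, coeff_mk, coeff_mk]
  push_cast
  ring

lemma derivative_X_mul_mul_one_sub_X_pow {R : Type*} [CommRing R] (F : R⟦X⟧) (k : ℕ) :
    d⁄dX R (X * F) * (1 - X) ^ (k + 2) =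
      (1 + (k : R⟦X⟧) * X) * (F * (1 - X) ^ (k + 1)) +
        X * (1 - X) * d⁄dX R (F * (1 - X) ^ (k + 1)) := by
  have hpow : d⁄dX R ((1 - X : R⟦X⟧) ^ (k + 1)) = -((k + 1 : R⟦X⟧) * (1 - X) ^ k) := by
    rw [Derivation.leibniz_pow, map_sub, derivative_X, Derivation.map_one_eq_zero,
      Nat.add_sub_cancel, smul_eq_mul, nsmul_eq_mul]
    push_cast
    ring
  rw [Derivation.leibniz, Derivation.leibniz, hpow, derivative_X, smul_eq_mul, smul_eq_mul,
    smul_eq_mul, smul_eq_mul]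
  ring

end PowerSeries

/-- Worpitzky's identity: as formal power series,
`∑_{m ≥ 1} m^k x^{m-1} = A_k(x)/(1-x)^{k+1}`, i.e. the series with coefficient
`(j+1)^k` of `x^j`, multiplied by `(1-x)^{k+1}`, equals the Eulerian polynomial. -/
theorem worpitzky (k : ℕ) :
    (PowerSeries.mk fun j : ℕ => (((j + 1) ^ k : ℕ) : ℝ)) *
      (1 - PowerSeries.X) ^ (k + 1) = (eulerian k : PowerSeries ℝ) := by
  induction k with
  | zero =>
    simp only [pow_zero, Nat.cast_one, zero_add, pow_one, eulerian_zero, Polynomial.coe_one]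
    exact PowerSeries.mk_one_mul_one_sub_eq_one ℝ
  | succ k ih =>
    rw [PowerSeries.mk_succ_pow_succ, PowerSeries.derivative_X_mul_mul_one_sub_X_pow, ih,
      eulerian_succ]
    simp only [PowerSeries.derivative_coe, Polynomial.coe_add, Polynomial.coe_mul,
      Polynomial.coe_one, Polynomial.coe_natCast, Polynomial.coe_X, Polynomial.coe_sub]
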